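/- arXiv:1610.00473 — 7 statements merged into one kernel-verified Lean document; each statement's English description precedes it below -/
import Mathlib

section
/- Let (X, ‖·‖) be a complex normed vector space. Then there exists a map [·,·] : X × X → ℂ such that: [x+y,z] = [x,z] + [y,z]; [λx,y] = λ[x,y] for all λ ∈ ℂ; [x,λy] = conj(λ)[x,y] for all λ ∈ ℂ; |[x,y]| ≤ ‖x‖·‖y‖ for all x,y; and [x,x] = ‖x‖² for all x ∈ X. -/
/-!
Write `y = c • r` with `r` a fixed representative of the complex line through `y`, and let `φ_r`
be a Hahn–Banach support functional of `r` (`‖φ_r‖ ≤ ‖r‖`, `φ_r r = ‖r‖²`). Then `conj c • φ_r`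
is a support functional of `y`, and `[x, y] := (conj c • φ_r) x` is a semi-inner product: it is
linear in `x` because `φ_r` is, conjugate homogeneous in `y` because `λ • y` has the same
representative `r` with coefficient `λ c`, and Cauchy–Schwarz is the bound on `‖φ_r‖`.
-/

open ComplexConjugate

section

variable {𝕜 X : Type*} [RCLike 𝕜] [NormedAddCommGroup X] [NormedSpace 𝕜 X]

def IsSupportFunctional (φ : X →L[𝕜] 𝕜) (y : X) : Prop :=
  ‖φ‖ ≤ ‖y‖ ∧ φ y = (‖y‖ : 𝕜) ^ 2

theorem exists_isSupportFunctional (y : X) : ∃ φ : X →L[𝕜] 𝕜, IsSupportFunctional φ y := by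
  by_cases hy : y = 0
  · exact ⟨0, by simp [IsSupportFunctional, hy]⟩
  obtain ⟨g, hg_norm, hg_apply⟩ := exists_dual_vector 𝕜 y (norm_ne_zero_iff.mpr hy)
  refine ⟨(‖y‖ : 𝕜) • g, ?_, ?_⟩
  · simp [norm_smul, hg_norm]
  · simp [hg_apply, sq]

namespace IsSupportFunctional

theorem smul {φ : X →L[𝕜] 𝕜} {y : X} (h : IsSupportFunctional φ y) (c : 𝕜) :
    IsSupportFunctional (conj c • φ) (c • y) := by
  refine ⟨?_, ?_⟩
  · rw [norm_smul, norm_smul, RCLike.norm_conj]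
    exact mul_le_mul_of_nonneg_left h.1 (norm_nonneg c)
  · rw [smul_apply, map_smul, h.2, smul_eq_mul, smul_eq_mul, norm_smul,
      ← mul_assoc, RCLike.conj_mul]
    push_cast
    ring

theorem norm_apply_le {φ : X →L[𝕜] 𝕜} {y : X} (h : IsSupportFunctional φ y) (x : X) :
    ‖φ x‖ ≤ ‖x‖ * ‖y‖ :=
  mul_comm ‖y‖ ‖x‖ ▸ φ.le_of_opNorm_le h.1 x

end IsSupportFunctional

namespace SupportMap

variable (𝕜) in
noncomputable def lineRep (y : X) : X :=
  (Quotient.mk (MulAction.orbitRel 𝕜ˣ X) y).out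

theorem lineRep_smul {c : 𝕜} (hc : c ≠ 0) (y : X) : lineRep 𝕜 (c • y) = lineRep 𝕜 y :=
  congrArg Quotient.out <| Quotient.sound <|
    MulAction.orbitRel_apply.mpr ⟨Units.mk0 c hc, rfl⟩

theorem exists_smul_lineRep (y : X) : ∃ c : 𝕜, c • lineRep 𝕜 y = y := by
  obtain ⟨u, hu⟩ :=
    MulAction.orbitRel_apply.mp (Quotient.mk_out (s := MulAction.orbitRel 𝕜ˣ X) y)
  refine ⟨(u⁻¹ : 𝕜ˣ), ?_⟩
  rw [lineRep, ← hu, Units.val_inv_eq_inv_val]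
  exact inv_smul_smul₀ u.ne_zero y

noncomputable def repFunctional (r : X) : X →L[𝕜] 𝕜 :=
  (exists_isSupportFunctional r).choose

theorem isSupportFunctional_repFunctional (r : X) :
    IsSupportFunctional (repFunctional (𝕜 := 𝕜) r) r :=
  (exists_isSupportFunctional r).choose_spec

variable (𝕜) in
/-- Read off with the support functional of the representative, so that it is visibly linear
in `y`. -/
noncomputable def lineCoeff (y : X) : 𝕜 :=
  repFunctional (lineRep 𝕜 y) y / (‖lineRep 𝕜 y‖ : 𝕜) ^ 2

theorem lineCoeff_smul (l : 𝕜) (y : X) : lineCoeff 𝕜 (l • y) = l * lineCoeff 𝕜 y := by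
  rcases eq_or_ne l 0 with rfl | hl
  · simp [lineCoeff]
  rw [lineCoeff, lineCoeff, lineRep_smul hl, map_smul, smul_eq_mul, mul_div_assoc]

theorem lineCoeff_smul_lineRep (y : X) : lineCoeff 𝕜 y • lineRep 𝕜 y = y := by
  obtain ⟨c, hc⟩ := exists_smul_lineRep (𝕜 := 𝕜) y
  rcases eq_or_ne (lineRep 𝕜 y) 0 with hr | hr
  · have hy : y = 0 := by rw [← hc, hr, smul_zero]
    rw [hr, smul_zero, hy]
  have hr' : (‖lineRep 𝕜 y‖ : 𝕜) ^ 2 ≠ 0 := by simpa using hr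
  have happly : repFunctional (lineRep 𝕜 y) y = c * (‖lineRep 𝕜 y‖ : 𝕜) ^ 2 := by
    calc repFunctional (lineRep 𝕜 y) y = repFunctional (lineRep 𝕜 y) (c • lineRep 𝕜 y) := by
          rw [hc]
      _ = c * (‖lineRep 𝕜 y‖ : 𝕜) ^ 2 := by
          rw [map_smul, (isSupportFunctional_repFunctional _).2, smul_eq_mul]
  rw [lineCoeff, happly, mul_div_assoc, div_self hr', mul_one, hc]

end SupportMap

open SupportMap in
theorem exists_conj_smul_isSupportFunctional :
    ∃ J : X → X →L[𝕜] 𝕜, (∀ y, IsSupportFunctional (J y) y) ∧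
      ∀ (c : 𝕜) (y : X), J (c • y) = conj c • J y := by
  refine ⟨fun y => conj (lineCoeff 𝕜 y) • repFunctional (lineRep 𝕜 y), fun y => ?_,
    fun c y => ?_⟩
  · simpa only [lineCoeff_smul_lineRep] using
      (isSupportFunctional_repFunctional (lineRep 𝕜 y)).smul (lineCoeff 𝕜 y)
  · rcases eq_or_ne c 0 with rfl | hc
    · dsimp only
      rw [lineCoeff_smul, zero_mul, map_zero]
      ext
      simp
    · simp only [lineCoeff_smul, lineRep_smul hc, map_mul, mul_smul]

end

/-- Lumer–Giles: every complex normed vector space can be represented as a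
semi-inner product space (with Giles's homogeneity in the second argument)
whose induced norm is the given norm. -/
theorem exists_sip_representation {X : Type*} [NormedAddCommGroup X]
    [NormedSpace ℂ X] :
    ∃ f : X → X → ℂ,
      (∀ x y z : X, f (x + y) z = f x z + f y z) ∧
      (∀ (l : ℂ) (x y : X), f (l • x) y = l * f x y) ∧
      (∀ (l : ℂ) (x y : X), f x (l • y) = (starRingEnd ℂ) l * f x y) ∧
      (∀ x y : X, ‖f x y‖ ≤ ‖x‖ * ‖y‖) ∧
      (∀ x : X, f x x = (‖x‖ : ℂ) ^ 2) := by
  obtain ⟨J, hJ, hJ_smul⟩ := exists_conj_smul_isSupportFunctional (𝕜 := ℂ) (X := X)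
  exact ⟨fun x y => J y x, fun x y z => map_add (J z) x y, fun l x y => map_smul (J y) l x,
    fun l x y => congrArg (fun φ => φ x) (hJ_smul l y), fun x y => (hJ y).norm_apply_le x,
    fun x => (hJ x).2⟩
end

section
/- Let (X, ‖·‖) be a complex normed vector space and [·,·] : X × X → ℂ a map satisfying: additivity and ℂ-homogeneity in the first argument, [x,λy] = conj(λ)[x,y] for all λ ∈ ℂ, |[x,y]| ≤ ‖x‖·‖y‖, and [x,x] = ‖x‖² for all x. Then the following are equivalent: (i) for all unit vectors x, y ∈ X, Re[y, x+λy] tends to Re[y,x] as the real parameter λ tends to 0; (ii) for all unit vectors x, y ∈ X, the limit of (‖x+λy‖ − ‖x‖)/λ as the real parameter λ tends to 0 (through nonzero values) exists. -/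
/-!
Along the line `t ↦ x + t • y` put `N t = ‖x + t • y‖` and `φ t = Re [y, x + t • y]`. The s.i.p.
axioms give `N t * (N t - N s) ≤ (t - s) * φ t`, so where `N > 0` the quotient `ψ = φ / N` is a
nondecreasing subgradient of the convex function `N`: `ψ s ≤ slope N s t ≤ ψ t` for `s < t`.
If `φ`, hence `ψ`, is continuous at `0`, this squeezes the difference quotients of `N` at `0` to
`ψ 0`. Conversely, if `N' 0 = L` exists, the squeeze forces `L = ψ 0`, and for `t > 0` we have
`ψ 0 ≤ ψ t ≤ slope N t (2 t)`, which tends to `2 L - L = L`; symmetrically for `t < 0`.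
-/

open Filter Topology

/-- The quotient `φ t / N t` is a subgradient of `N` at every `t` where `N t > 0`;
the inequality is multiplied out so that it also makes sense where `N` vanishes. -/
def IsSubgradientQuotient (N φ : ℝ → ℝ) : Prop :=
  ∀ s t, N t * (N t - N s) ≤ (t - s) * φ t

/-- `slope N t (2 t - a)` is the slope at `a` of `u ↦ N (2 u - a) - N u`, whose derivative at `a`
is `2 L - L`. -/
theorem HasDerivAt.tendsto_slope_two_mul_sub {N : ℝ → ℝ} {L a : ℝ} (hN : HasDerivAt N L a) :
    Tendsto (fun t => slope N t (2 * t - a)) (𝓝[≠] a) (𝓝 L) := by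
  have hdouble : HasDerivAt (fun u => N (2 * u - a)) (L * 2) a := by
    have hlin : HasDerivAt (fun u : ℝ => 2 * u - a) 2 a := by
      simpa using ((hasDerivAt_id a).const_mul 2).sub_const a
    have hN' : HasDerivAt N L (2 * a - a) := by rwa [two_mul, add_sub_cancel_right]
    exact HasDerivAt.comp (h := fun u => 2 * u - a) a hN' hlin
  have hG := hasDerivAt_iff_tendsto_slope.1 (hdouble.sub hN)
  rw [show L * 2 - L = L by ring] at hG
  refine hG.congr fun t => ?_
  simp only [slope_def_field, Pi.sub_apply]
  rw [two_mul a, add_sub_cancel_right, sub_self, sub_zero, two_mul, add_sub_assoc,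
    add_sub_cancel_left]

namespace IsSubgradientQuotient

variable {N φ : ℝ → ℝ} {a L s t : ℝ}

theorem div_le_slope (h : IsSubgradientQuotient N φ) (hst : s < t) (hs : 0 < N s) :
    φ s / N s ≤ slope N s t := by
  have := h t s
  rw [slope_def_field, div_le_div_iff₀ hs (sub_pos.2 hst)]
  nlinarith

theorem slope_le_div (h : IsSubgradientQuotient N φ) (hst : s < t) (ht : 0 < N t) :
    slope N s t ≤ φ t / N t := by
  have := h s t
  rw [slope_def_field, div_le_div_iff₀ (sub_pos.2 hst) ht]
  nlinarith

theorem div_le_div (h : IsSubgradientQuotient N φ) (hst : s < t) (hs : 0 < N s)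
    (ht : 0 < N t) : φ s / N s ≤ φ t / N t :=
  (h.div_le_slope hst hs).trans (h.slope_le_div hst ht)

theorem hasDerivAt (h : IsSubgradientQuotient N φ) (hN : ContinuousAt N a) (ha : 0 < N a)
    (hφ : ContinuousAt φ a) : HasDerivAt N (φ a / N a) a := by
  have hψ : Tendsto (fun t => φ t / N t) (𝓝 a) (𝓝 (φ a / N a)) := hφ.div hN ha.ne'
  have hpos : ∀ᶠ t in 𝓝 a, 0 < N t := hN.eventually (lt_mem_nhds ha)
  rw [hasDerivAt_iff_tendsto_slope, ← nhdsLT_sup_nhdsGT, tendsto_sup]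
  constructor
  · refine tendsto_of_tendsto_of_tendsto_of_le_of_le' (hψ.mono_left nhdsWithin_le_nhds)
      tendsto_const_nhds ?_ ?_
    · filter_upwards [nhdsWithin_le_nhds hpos, self_mem_nhdsWithin] with t ht hta
      exact slope_comm N a t ▸ h.div_le_slope hta ht
    · filter_upwards [self_mem_nhdsWithin] with t hta
      exact slope_comm N a t ▸ h.slope_le_div hta ha
  · refine tendsto_of_tendsto_of_tendsto_of_le_of_le' tendsto_const_nhds
      (hψ.mono_left nhdsWithin_le_nhds) ?_ ?_
    · filter_upwards [self_mem_nhdsWithin] with t hta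
      exact h.div_le_slope hta ha
    · filter_upwards [nhdsWithin_le_nhds hpos, self_mem_nhdsWithin] with t ht hta
      exact h.slope_le_div hta ht

theorem eq_div_of_hasDerivAt (h : IsSubgradientQuotient N φ) (hN : HasDerivAt N L a)
    (ha : 0 < N a) : L = φ a / N a := by
  have hslope := hasDerivAt_iff_tendsto_slope.1 hN
  apply le_antisymm
  · refine le_of_tendsto (hslope.mono_left (nhdsLT_le_nhdsNE a)) ?_
    filter_upwards [self_mem_nhdsWithin] with t hta
    exact slope_comm N a t ▸ h.slope_le_div hta ha
  · refine ge_of_tendsto (hslope.mono_left (nhdsGT_le_nhdsNE a)) ?_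
    filter_upwards [self_mem_nhdsWithin] with t hta
    exact h.div_le_slope hta ha

theorem continuousAt (h : IsSubgradientQuotient N φ) (hN : HasDerivAt N L a) (ha : 0 < N a) :
    ContinuousAt φ a := by
  have hL := h.eq_div_of_hasDerivAt hN ha
  have hpos : ∀ᶠ t in 𝓝 a, 0 < N t := hN.continuousAt.eventually (lt_mem_nhds ha)
  have hdouble := hL ▸ hN.tendsto_slope_two_mul_sub
  have hψ : ContinuousAt (fun t => φ t / N t) a := by
    rw [continuousAt_iff_continuous_left'_right']
    constructor
    · refine tendsto_of_tendsto_of_tendsto_of_le_of_le'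
        (hdouble.mono_left (nhdsLT_le_nhdsNE a)) tendsto_const_nhds ?_ ?_
      · filter_upwards [nhdsWithin_le_nhds hpos, self_mem_nhdsWithin] with t ht hta
        exact slope_comm N t _ ▸ h.slope_le_div (by linarith [show t < a from hta]) ht
      · filter_upwards [nhdsWithin_le_nhds hpos, self_mem_nhdsWithin] with t ht hta
        exact h.div_le_div hta ht ha
    · refine tendsto_of_tendsto_of_tendsto_of_le_of_le' tendsto_const_nhds
        (hdouble.mono_left (nhdsGT_le_nhdsNE a)) ?_ ?_
      · filter_upwards [nhdsWithin_le_nhds hpos, self_mem_nhdsWithin] with t ht hta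
        exact h.div_le_div hta ha ht
      · filter_upwards [nhdsWithin_le_nhds hpos, self_mem_nhdsWithin] with t ht hta
        exact h.div_le_slope (by linarith [show a < t from hta]) ht
  refine (hψ.mul hN.continuousAt).congr ?_
  filter_upwards [hpos] with t ht
  exact div_mul_cancel₀ _ ht.ne'

theorem continuousAt_iff_exists_hasDerivAt (h : IsSubgradientQuotient N φ)
    (hN : ContinuousAt N a) (ha : 0 < N a) : ContinuousAt φ a ↔ ∃ L, HasDerivAt N L a :=
  ⟨fun hφ => ⟨_, h.hasDerivAt hN ha hφ⟩, fun ⟨_, hL⟩ => h.continuousAt hL ha⟩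

end IsSubgradientQuotient

theorem norm_mul_sub_norm_le_re_apply_sub {X : Type*} [NormedAddCommGroup X] {f : X → X → ℂ}
    (hadd : ∀ x y z : X, f (x + y) z = f x z + f y z)
    (hcs : ∀ x y : X, ‖f x y‖ ≤ ‖x‖ * ‖y‖) (hnorm : ∀ x : X, f x x = (‖x‖ : ℂ) ^ 2) (z w : X) :
    ‖z‖ * (‖z‖ - ‖w‖) ≤ (f (z - w) z).re := by
  have hsplit : ‖z‖ ^ 2 = (f (z - w) z).re + (f w z).re := by
    rw [← Complex.add_re, ← hadd, sub_add_cancel, hnorm]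
    norm_cast
  have hw : (f w z).re ≤ ‖w‖ * ‖z‖ := (Complex.re_le_norm _).trans (hcs w z)
  nlinarith

theorem isSubgradientQuotient_norm_line {X : Type*} [NormedAddCommGroup X] [NormedSpace ℂ X]
    {f : X → X → ℂ} (hadd : ∀ x y z : X, f (x + y) z = f x z + f y z)
    (hsmul : ∀ (l : ℂ) (x y : X), f (l • x) y = l * f x y)
    (hcs : ∀ x y : X, ‖f x y‖ ≤ ‖x‖ * ‖y‖) (hnorm : ∀ x : X, f x x = (‖x‖ : ℂ) ^ 2) (x y : X) :
    IsSubgradientQuotient (fun t : ℝ => ‖x + (t : ℂ) • y‖)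
      (fun t => (f y (x + (t : ℂ) • y)).re) := by
  intro s t
  have := norm_mul_sub_norm_le_re_apply_sub hadd hcs hnorm (x + (t : ℂ) • y) (x + (s : ℂ) • y)
  rwa [add_sub_add_left_eq_sub, ← sub_smul, ← Complex.ofReal_sub, hsmul,
    Complex.re_ofReal_mul] at this

theorem continuous_sip_iff_gateaux_general {X : Type*} [NormedAddCommGroup X]
    [NormedSpace ℂ X] (f : X → X → ℂ)
    (hadd : ∀ x y z : X, f (x + y) z = f x z + f y z)
    (hsmul : ∀ (l : ℂ) (x y : X), f (l • x) y = l * f x y)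
    (hcs : ∀ x y : X, ‖f x y‖ ≤ ‖x‖ * ‖y‖)
    (hnorm : ∀ x : X, f x x = (‖x‖ : ℂ) ^ 2) :
    (∀ x y : X, ‖x‖ = 1 → ‖y‖ = 1 →
        Filter.Tendsto (fun l : ℝ => (f y (x + (l : ℂ) • y)).re)
          (nhds 0) (nhds ((f y x).re))) ↔
    (∀ x y : X, ‖x‖ = 1 → ‖y‖ = 1 →
        ∃ L : ℝ, Filter.Tendsto (fun l : ℝ => (‖x + (l : ℂ) • y‖ - ‖x‖) / l)
          (nhdsWithin 0 {(0 : ℝ)}ᶜ) (nhds L)) := by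
  have hline : ∀ x y : X, ‖x‖ = 1 →
      (Tendsto (fun l : ℝ => (f y (x + (l : ℂ) • y)).re) (𝓝 0) (𝓝 (f y x).re) ↔
        ∃ L : ℝ, Tendsto (fun l : ℝ => (‖x + (l : ℂ) • y‖ - ‖x‖) / l) (𝓝[≠] 0) (𝓝 L)) := by
    intro x y hx
    have h := (isSubgradientQuotient_norm_line hadd hsmul hcs hnorm x y
      ).continuousAt_iff_exists_hasDerivAt (a := 0) (by fun_prop) (by simp [hx])
    simpa [ContinuousAt, hasDerivAt_iff_tendsto_slope, slope_fun_def_field] using h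
  exact forall₂_congr fun x y => imp_congr_right fun hx => imp_congr_right fun _ => hline x y hx

/-- Giles's theorem: an s.i.p. space representing the norm is a continuous
s.i.p. space if and only if the norm is Gâteaux differentiable. -/
theorem continuous_sip_iff_gateaux {X : Type*} [NormedAddCommGroup X]
    [NormedSpace ℂ X] (f : X → X → ℂ)
    (hadd : ∀ x y z : X, f (x + y) z = f x z + f y z)
    (hsmul : ∀ (l : ℂ) (x y : X), f (l • x) y = l * f x y)
    (hconj : ∀ (l : ℂ) (x y : X), f x (l • y) = (starRingEnd ℂ) l * f x y)
    (hcs : ∀ x y : X, ‖f x y‖ ≤ ‖x‖ * ‖y‖)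
    (hnorm : ∀ x : X, f x x = (‖x‖ : ℂ) ^ 2) :
    (∀ x y : X, ‖x‖ = 1 → ‖y‖ = 1 →
        Filter.Tendsto (fun l : ℝ => (f y (x + (l : ℂ) • y)).re)
          (nhds 0) (nhds ((f y x).re))) ↔
    (∀ x y : X, ‖x‖ = 1 → ‖y‖ = 1 →
        ∃ L : ℝ, Filter.Tendsto (fun l : ℝ => (‖x + (l : ℂ) • y‖ - ‖x‖) / l)
          (nhdsWithin 0 {(0 : ℝ)}ᶜ) (nhds L)) :=
  continuous_sip_iff_gateaux_general f hadd hsmul hcs hnorm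
end

section
/- Let (X, ‖·‖) be a complex normed vector space and [·,·] : X × X → ℂ a map satisfying: additivity and ℂ-homogeneity in the first argument, [x,λy] = conj(λ)[x,y] for all λ ∈ ℂ, |[x,y]| ≤ ‖x‖·‖y‖, and [x,x] = ‖x‖² for all x. If x, y ∈ X satisfy [y,x] = 0, then ‖x + λy‖ ≥ ‖x‖ for every λ ∈ ℂ; that is, s.i.p. orthogonality implies Birkhoff orthogonality. -/
theorem norm_le_of_sip_eq {X : Type*} [SeminormedAddCommGroup X] (f : X → X → ℂ)
    (hcs : ∀ x y : X, ‖f x y‖ ≤ ‖x‖ * ‖y‖) (hnorm : ∀ x : X, f x x = (‖x‖ : ℂ) ^ 2)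
    {x z : X} (h : f z x = f x x) : ‖x‖ ≤ ‖z‖ := by
  rcases (norm_nonneg x).eq_or_lt with hx | hx
  · exact hx ▸ norm_nonneg z
  refine le_of_mul_le_mul_right ?_ hx
  calc ‖x‖ * ‖x‖ = ‖f z x‖ := by rw [h, hnorm, norm_pow, Complex.norm_real, norm_norm, sq]
    _ ≤ ‖z‖ * ‖x‖ := hcs z x

theorem sip_orthogonal_implies_birkhoff_general {X : Type*} [NormedAddCommGroup X]
    [NormedSpace ℂ X] (f : X → X → ℂ)
    (hadd : ∀ x y z : X, f (x + y) z = f x z + f y z)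
    (hsmul : ∀ (l : ℂ) (x y : X), f (l • x) y = l * f x y)
    (hcs : ∀ x y : X, ‖f x y‖ ≤ ‖x‖ * ‖y‖)
    (hnorm : ∀ x : X, f x x = (‖x‖ : ℂ) ^ 2)
    (x y : X) (hxy : f y x = 0) :
    ∀ l : ℂ, ‖x‖ ≤ ‖x + l • y‖ := by
  intro l
  apply norm_le_of_sip_eq f hcs hnorm
  rw [hadd, hsmul, hxy, mul_zero, add_zero]

/-- In an s.i.p. space representing the norm, s.i.p. orthogonality implies
Birkhoff orthogonality: if `[y,x] = 0` then `‖x + λy‖ ≥ ‖x‖` for all `λ ∈ ℂ`. -/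
theorem sip_orthogonal_implies_birkhoff {X : Type*} [NormedAddCommGroup X]
    [NormedSpace ℂ X] (f : X → X → ℂ)
    (hadd : ∀ x y z : X, f (x + y) z = f x z + f y z)
    (hsmul : ∀ (l : ℂ) (x y : X), f (l • x) y = l * f x y)
    (hconj : ∀ (l : ℂ) (x y : X), f x (l • y) = (starRingEnd ℂ) l * f x y)
    (hcs : ∀ x y : X, ‖f x y‖ ≤ ‖x‖ * ‖y‖)
    (hnorm : ∀ x : X, f x x = (‖x‖ : ℂ) ^ 2)
    (x y : X) (hxy : f y x = 0) :
    ∀ l : ℂ, ‖x‖ ≤ ‖x + l • y‖ :=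
  sip_orthogonal_implies_birkhoff_general f hadd hsmul hcs hnorm x y hxy
end

section
/- Let a, c, t, x be real numbers with a > 0, c > 0, a ≠ c, (t−c)² ≥ x² and (t+c)² ≥ x². If √((t−c)² − x²) + √((t+c)² − x²) = 2a, then t²/a² − x²/(a²−c²) = 1. That is, every point of the relativistic time-like ellipse with foci F = (c,0) and F' = (−c,0) lies on the geometrical conic t²/a² − x²/(a²−c²) = 1. -/
/-- Birkhoff–Morris: every point of the relativistic time-like ellipse with
foci F = (c,0), F' = (−c,0) lies on the geometrical conic
t²/a² − x²/(a²−c²) = 1. -/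
theorem relativistic_ellipse_on_conic (a c t x : ℝ)
    (ha : 0 < a) (hc : 0 < c) (hac : a ≠ c)
    (h₁ : x ^ 2 ≤ (t - c) ^ 2) (h₂ : x ^ 2 ≤ (t + c) ^ 2)
    (h : Real.sqrt ((t - c) ^ 2 - x ^ 2) + Real.sqrt ((t + c) ^ 2 - x ^ 2)
      = 2 * a) :
    t ^ 2 / a ^ 2 - x ^ 2 / (a ^ 2 - c ^ 2) = 1 := by
  have h1' : (0:ℝ) ≤ (t - c) ^ 2 - x ^ 2 := by linarith
  have h2' : (0:ℝ) ≤ (t + c) ^ 2 - x ^ 2 := by linarith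
  set u := Real.sqrt ((t - c) ^ 2 - x ^ 2) with hu
  set v := Real.sqrt ((t + c) ^ 2 - x ^ 2) with hv
  have hu2 : u ^ 2 = (t - c) ^ 2 - x ^ 2 := Real.sq_sqrt h1'
  have hv2 : v ^ 2 = (t + c) ^ 2 - x ^ 2 := Real.sq_sqrt h2'
  have hun : 0 ≤ u := Real.sqrt_nonneg _
  have hvn : 0 ≤ v := Real.sqrt_nonneg _
  have hprod : (a - c) * (a + c) ≠ 0 := by
    intro hh
    rcases mul_eq_zero.1 hh with h' | h'
    · exact hac (by linarith)
    · linarith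
  have hac2 : a ^ 2 - c ^ 2 ≠ 0 := by
    intro hh; apply hprod; nlinarith
  have key : a * (v - u) = 2 * t * c := by nlinarith
  have key2 : 2 * a * u = 2 * a ^ 2 - 2 * t * c := by nlinarith
  have key3 : 4 * a ^ 2 * u ^ 2 = (2 * a ^ 2 - 2 * t * c) ^ 2 := by nlinarith
  have ha2 : a ^ 2 ≠ 0 := by positivity
  field_simp
  nlinarith [key3, hu2, sq_nonneg a]
end

section
/- Let a, c, t, x be real numbers with a > 0, c > 0, a ≠ c, (t−c)² ≥ x² and (t+c)² ≥ x². If √((t−c)² − x²) − √((t+c)² − x²) = 2a, then t²/a² − x²/(a²−c²) = 1. That is, every point of the relativistic hyperbola branch with foci F = (c,0) and F' = (−c,0) lies on the geometrical conic t²/a² − x²/(a²−c²) = 1. -/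
/-- Birkhoff–Morris: every point of the relativistic hyperbola branch with
foci F = (c,0), F' = (−c,0) lies on the geometrical conic
t²/a² − x²/(a²−c²) = 1. -/
theorem relativistic_hyperbola_on_conic (a c t x : ℝ)
    (ha : 0 < a) (hc : 0 < c) (hac : a ≠ c)
    (h₁ : x ^ 2 ≤ (t - c) ^ 2) (h₂ : x ^ 2 ≤ (t + c) ^ 2)
    (h : Real.sqrt ((t - c) ^ 2 - x ^ 2) - Real.sqrt ((t + c) ^ 2 - x ^ 2)
      = 2 * a) :
    t ^ 2 / a ^ 2 - x ^ 2 / (a ^ 2 - c ^ 2) = 1 := by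
  set u := Real.sqrt ((t - c) ^ 2 - x ^ 2) with hu_def
  set v := Real.sqrt ((t + c) ^ 2 - x ^ 2) with hv_def
  have hu : u ^ 2 = (t - c) ^ 2 - x ^ 2 := Real.sq_sqrt (by linarith)
  have hv : v ^ 2 = (t + c) ^ 2 - x ^ 2 := Real.sq_sqrt (by linarith)
  have key : 2 * a * (u + v) = -(4 * t * c) := by
    have : (u - v) * (u + v) = u ^ 2 - v ^ 2 := by ring
    rw [h, hu, hv] at this
    linarith [this]
  have huv : u + v = -(2 * t * c) / a := by
    field_simp
    linarith [key]
  have hu' : u = a - t * c / a := by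
    have : u = ((u - v) + (u + v)) / 2 := by ring
    rw [h, huv] at this
    rw [this]; field_simp; ring
  have hu2 : (a - t * c / a) ^ 2 = (t - c) ^ 2 - x ^ 2 := by rw [← hu']; exact hu
  have ha2 : a ^ 2 ≠ 0 := by positivity
  have hac2 : a ^ 2 - c ^ 2 ≠ 0 := by
    intro hcon
    exact hac (by nlinarith)
  field_simp at hu2 ⊢
  nlinarith [hu2]
end

section
/- Let X be a two-dimensional real normed space (Minkowski plane), let x, y ∈ X with x ≠ y, and let a be a real number with 2a > ‖x − y‖. Then for every z ∈ X the following are equivalent: (i) ‖z − x‖ + ‖z − y‖ = 2a; (ii) there exists ε > 0 such that ‖z − x‖ = ε, the closed ball of radius ε centered at z is contained in the closed ball of radius 2a centered at y, and there exists a point w with ‖w − z‖ = ε and ‖w − y‖ = 2a. That is, an ellipse defined by its foci is always an ellipse defined by its leading circle and a focus, and conversely. -/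
/-- In a Minkowski plane, an ellipse defined by its foci is always an ellipse
defined by its leading circle and a focus, and conversely. -/
theorem ellipse_foci_iff_leading_circle {X : Type*} [NormedAddCommGroup X]
    [NormedSpace ℝ X] (hdim : Module.finrank ℝ X = 2)
    (x y : X) (hxy : x ≠ y) (a : ℝ) (ha : ‖x - y‖ < 2 * a) :
    ∀ z : X,
      ‖z - x‖ + ‖z - y‖ = 2 * a ↔
        ∃ ε : ℝ, 0 < ε ∧ ‖z - x‖ = ε ∧
          Metric.closedBall z ε ⊆ Metric.closedBall y (2 * a) ∧
          ∃ w : X, ‖w - z‖ = ε ∧ ‖w - y‖ = 2 * a := by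
  intro z
  constructor
  · intro h
    have hzx : z ≠ x := by
      rintro rfl
      rw [sub_self, norm_zero, zero_add] at h
      linarith
    have hzy : z ≠ y := by
      rintro rfl
      rw [sub_self, norm_zero, add_zero] at h
      rw [norm_sub_rev x] at ha
      linarith
    have hε : 0 < ‖z - x‖ := norm_pos_iff.mpr (sub_ne_zero.mpr hzx)
    have hd : 0 < ‖z - y‖ := norm_pos_iff.mpr (sub_ne_zero.mpr hzy)
    refine ⟨‖z - x‖, hε, rfl, ?_, ?_⟩
    · intro u hu
      rw [Metric.mem_closedBall, dist_eq_norm] at hu ⊢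
      calc ‖u - y‖ ≤ ‖u - z‖ + ‖z - y‖ := norm_sub_le_norm_sub_add_norm_sub u z y
        _ ≤ ‖z - x‖ + ‖z - y‖ := by linarith
        _ = 2 * a := h
    · refine ⟨z + (‖z - x‖ / ‖z - y‖) • (z - y), ?_, ?_⟩
      · have : z + (‖z - x‖ / ‖z - y‖) • (z - y) - z = (‖z - x‖ / ‖z - y‖) • (z - y) := by
          abel
        rw [this, norm_smul, Real.norm_eq_abs, abs_of_nonneg (by positivity),
          div_mul_cancel₀ _ hd.ne']
      · have : z + (‖z - x‖ / ‖z - y‖) • (z - y) - y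
            = (1 + ‖z - x‖ / ‖z - y‖) • (z - y) := by
          rw [add_smul, one_smul]; abel
        rw [this, norm_smul, Real.norm_eq_abs, abs_of_nonneg (by positivity),
          add_mul, one_mul, div_mul_cancel₀ _ hd.ne']
        linarith
  · rintro ⟨ε, hε, hzx, hsub, w, hwz, hwy⟩
    by_cases hzy : z = y
    · subst hzy
      rw [sub_self, norm_zero, add_zero, hzx, ← hwz, hwy]
    · have hd : 0 < ‖z - y‖ := norm_pos_iff.mpr (sub_ne_zero.mpr hzy)
      have h1 : ‖z - y‖ + ε ≤ 2 * a := by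
        have hu : z + (ε / ‖z - y‖) • (z - y) ∈ Metric.closedBall z ε := by
          rw [Metric.mem_closedBall, dist_eq_norm]
          have : z + (ε / ‖z - y‖) • (z - y) - z = (ε / ‖z - y‖) • (z - y) := by abel
          rw [this, norm_smul, Real.norm_eq_abs, abs_of_nonneg (by positivity),
            div_mul_cancel₀ _ hd.ne']
        have := hsub hu
        rw [Metric.mem_closedBall, dist_eq_norm] at this
        have heq : z + (ε / ‖z - y‖) • (z - y) - y = (1 + ε / ‖z - y‖) • (z - y) := by
          rw [add_smul, one_smul]; abel
        rw [heq, norm_smul, Real.norm_eq_abs, abs_of_nonneg (by positivity),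
          add_mul, one_mul, div_mul_cancel₀ _ hd.ne'] at this
        linarith
      have h2 : 2 * a ≤ ε + ‖z - y‖ := by
        calc 2 * a = ‖w - y‖ := hwy.symm
          _ ≤ ‖w - z‖ + ‖z - y‖ := norm_sub_le_norm_sub_add_norm_sub w z y
          _ = ε + ‖z - y‖ := by rw [hwz]
      rw [hzx]; linarith
end

section
/- Let X be a two-dimensional real normed space (Minkowski plane). Then X is strictly convex if and only if for every line (one-dimensional affine subspace) l ⊆ X and every point x ∉ l, the metric parabola P = {z ∈ X : dist(z, l) = ‖z − x‖} contains no nondegenerate line segment (i.e. there are no two distinct points p, q ∈ P with the whole segment [p,q] contained in P). -/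
set_option maxHeartbeats 800000

open Metric Submodule Pointwise

section Aux

variable {X : Type*} [NormedAddCommGroup X] [NormedSpace ℝ X]

/-- Distance to a submodule is invariant under translation by an element of the submodule. -/
lemma parab_aux_translate (S : Submodule ℝ X) {w : X} (hw : w ∈ S) (y : X) :
    infDist (y + w) (S : Set X) = infDist y (S : Set X) := by
  have hiso : Isometry (fun z : X => z + w) :=
    Isometry.of_dist_eq fun a b => by simp [dist_add_right]
  have himg : (fun z : X => z + w) '' (S : Set X) = (S : Set X) := by
    ext z
    constructor
    · rintro ⟨z', hz', rfl⟩
      exact S.add_mem hz' hw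
    · intro hz
      exact ⟨z - w, S.sub_mem hz hw, by simp⟩
  have h := infDist_image (x := y) (t := (S : Set X)) hiso
  rw [himg] at h
  exact h

/-- Distance to a submodule scales with scalar multiplication. -/
lemma parab_aux_smul (S : Submodule ℝ X) (c : ℝ) (y : X) :
    infDist (c • y) (S : Set X) = |c| * infDist y (S : Set X) := by
  rcases eq_or_ne c 0 with rfl | hc
  · simp [infDist_zero_of_mem S.zero_mem]
  · have himg : c • (S : Set X) = (S : Set X) := by
      ext z
      rw [Set.mem_smul_set_iff_inv_smul_mem₀ hc]
      constructor
      · intro h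
        have := S.smul_mem c h
        rwa [smul_inv_smul₀ hc] at this
      · intro h
        exact S.smul_mem c⁻¹ h
    have h := infDist_smul₀ (𝕜 := ℝ) hc (S : Set X) y
    rw [himg, Real.norm_eq_abs] at h
    exact h

/-- In a two-dimensional normed space, the distance to a line `{p + t • d}` is, up to a
positive constant, the absolute value of a linear functional vanishing on the direction `d`. -/
lemma parab_line_formula (hdim : Module.finrank ℝ X = 2) {d : X} (hd : d ≠ 0) :
    ∃ φ : X →ₗ[ℝ] ℝ, ∃ D : ℝ, 0 < D ∧ φ d = 0 ∧
      (∀ p z : X, infDist z {q : X | ∃ t : ℝ, q = p + t • d} = |φ (z - p)| * D) ∧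
      (∀ p q : X, (∃ t : ℝ, q = p + t • d) ↔ φ (q - p) = 0) ∧
      (∃ g : X, φ g = 1) := by
  haveI : FiniteDimensional ℝ X := FiniteDimensional.of_finrank_eq_succ hdim
  set S := Submodule.span ℝ {d} with hSdef
  have hSd : ∀ y : X, y ∈ S ↔ ∃ c : ℝ, c • d = y := fun y => Submodule.mem_span_singleton
  have hdS : d ∈ S := Submodule.mem_span_singleton_self d
  -- find a vector outside the span of d
  have hSne : ∃ e : X, e ∉ S := by
    by_contra h
    push_neg at h
    have htop : S = ⊤ := Submodule.eq_top_iff'.mpr h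
    have h1 : Module.finrank ℝ S = 1 := finrank_span_singleton hd
    rw [htop, finrank_top, hdim] at h1
    omega
  obtain ⟨e, he⟩ := hSne
  have he0 : e ≠ 0 := fun h => he (h ▸ S.zero_mem)
  have hind : LinearIndependent ℝ ![d, e] := by
    rw [linearIndependent_fin2]
    refine ⟨by simpa using he0, fun c hc => ?_⟩
    simp only [Matrix.cons_val_one, Matrix.head_cons, Matrix.cons_val_zero] at hc
    rcases eq_or_ne c 0 with rfl | hc0
    · rw [zero_smul] at hc
      exact hd hc.symm
    · refine he ((hSd e).2 ⟨c⁻¹, ?_⟩)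
      rw [← hc, smul_smul, inv_mul_cancel₀ hc0, one_smul]
  have hcard : Fintype.card (Fin 2) = Module.finrank ℝ X := by simp [hdim]
  set B := basisOfLinearIndependentOfCardEqFinrank hind hcard with hBdef
  have hB : ⇑B = ![d, e] := coe_basisOfLinearIndependentOfCardEqFinrank hind hcard
  have hB0 : B 0 = d := by rw [hB]; rfl
  have hB1 : B 1 = e := by rw [hB]; rfl
  have hrepr : ∀ y : X, y = B.repr y 0 • d + B.repr y 1 • e := by
    intro y
    conv_lhs => rw [← B.sum_repr y]
    rw [Fin.sum_univ_two, hB0, hB1]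
  have hrd1 : B.repr d 1 = 0 := by
    rw [← hB0, B.repr_self]
    simp
  have hre1 : B.repr e 1 = 1 := by
    rw [← hB1, B.repr_self]
    simp
  -- membership in S in terms of the second coordinate
  have hmemS : ∀ y : X, y ∈ S ↔ B.repr y 1 = 0 := by
    intro y
    constructor
    · intro hy
      obtain ⟨c, rfl⟩ := (hSd y).1 hy
      rw [map_smul, Finsupp.smul_apply, hrd1, smul_zero]
    · intro hy
      refine (hSd y).2 ⟨B.repr y 0, ?_⟩
      conv_rhs => rw [hrepr y]
      rw [hy, zero_smul, add_zero]
  -- positivity of the distance of e to S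
  have hSclosed : IsClosed (S : Set X) := S.closed_of_finiteDimensional
  set D := infDist e (S : Set X) with hDdef
  have hD0 : D ≠ 0 := by
    intro h
    exact he ((hSclosed.mem_iff_infDist_zero ⟨0, S.zero_mem⟩).2 h)
  have hDpos : 0 < D := lt_of_le_of_ne infDist_nonneg (Ne.symm hD0)
  -- the distance formula on the subspace
  have hspan : ∀ y : X, infDist y (S : Set X) = |B.repr y 1| * D := by
    intro y
    calc infDist y (S : Set X)
        = infDist (B.repr y 1 • e + B.repr y 0 • d) (S : Set X) := by
          rw [add_comm (B.repr y 1 • e), ← hrepr y]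
      _ = infDist (B.repr y 1 • e) (S : Set X) :=
          parab_aux_translate S (S.smul_mem _ hdS) _
      _ = |B.repr y 1| * D := parab_aux_smul S _ e
  -- the reduction from the line to the subspace
  have hline : ∀ p z : X, infDist z {q : X | ∃ t : ℝ, q = p + t • d}
      = infDist (z - p) (S : Set X) := by
    intro p z
    have hiso : Isometry (fun y : X => y + p) :=
      Isometry.of_dist_eq fun a b => by simp [dist_add_right]
    have himg : (fun y : X => y + p) '' (S : Set X)
        = {q : X | ∃ t : ℝ, q = p + t • d} := by
      ext q
      simp only [Set.mem_image, Set.mem_setOf_eq, SetLike.mem_coe]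
      constructor
      · rintro ⟨y, hy, rfl⟩
        obtain ⟨c, rfl⟩ := (hSd y).1 hy
        exact ⟨c, by abel⟩
      · rintro ⟨t, rfl⟩
        exact ⟨t • d, (hSd _).2 ⟨t, rfl⟩, by abel⟩
    have h := infDist_image (x := z - p) (t := (S : Set X)) hiso
    rw [himg] at h
    simpa using h
  refine ⟨B.coord 1, D, hDpos, ?_, ?_, ?_, ⟨e, ?_⟩⟩
  · rw [Module.Basis.coord_apply, hrd1]
  · intro p z
    rw [hline p z, hspan (z - p), Module.Basis.coord_apply]
  · intro p q
    rw [Module.Basis.coord_apply, ← hmemS (q - p)]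
    constructor
    · rintro ⟨t, rfl⟩
      exact (hSd _).2 ⟨t, by abel⟩
    · intro hq
      obtain ⟨c, hc⟩ := (hSd _).1 hq
      exact ⟨c, by rw [hc]; abel⟩
  · rw [Module.Basis.coord_apply, hre1]

end Aux

/-- A Minkowski plane is strictly convex if and only if every metric parabola
(the locus of points equidistant from a leading line and a focus not on it)
contains no nondegenerate segment. -/
theorem strictly_convex_iff_parabola_no_segment {X : Type*}
    [NormedAddCommGroup X] [NormedSpace ℝ X]
    (hdim : Module.finrank ℝ X = 2) :
    StrictConvexSpace ℝ X ↔
      ∀ (l : Set X) (p d : X), d ≠ 0 →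
        l = {q : X | ∃ t : ℝ, q = p + t • d} →
        ∀ x : X, x ∉ l →
          ¬ ∃ u ∈ {z : X | Metric.infDist z l = ‖z - x‖},
            ∃ v ∈ {z : X | Metric.infDist z l = ‖z - x‖},
              u ≠ v ∧
                segment ℝ u v ⊆ {z : X | Metric.infDist z l = ‖z - x‖} := by
  constructor
  · -- strictly convex ⟹ no segment on a parabola
    intro hsc l p d hd hl x hx
    subst hl
    rintro ⟨u, hu, v, hv, huv, hseg⟩
    simp only [Set.mem_setOf_eq] at hu hv
    obtain ⟨φ, D, hDpos, hφd, hdist', hmem', -⟩ := parab_line_formula hdim hd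
    have hdist := hdist' p
    have hmem := hmem' p
    have hxE : φ (x - p) ≠ 0 := fun h => hx (Set.mem_setOf_eq ▸ (hmem x).2 h)
    -- every point of the parabola lies strictly on the same side of the line as the focus
    have hsign : ∀ z : X, Metric.infDist z {q : X | ∃ t : ℝ, q = p + t • d} = ‖z - x‖ →
        0 < φ (z - p) * φ (x - p) := by
      intro z hz
      have hzx : z ≠ x := by
        rintro rfl
        rw [sub_self, norm_zero, hdist] at hz
        have : φ (z - p) = 0 := by
          rcases mul_eq_zero.1 hz with h | h
          · exact abs_eq_zero.1 h
          · exact absurd h hDpos.ne'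
        exact hxE this
      have hznorm : 0 < ‖z - x‖ := by
        rw [norm_pos_iff]
        exact sub_ne_zero.2 hzx
      have hzA : φ (z - p) ≠ 0 := by
        intro h0
        have hzl : z ∈ {q : X | ∃ t : ℝ, q = p + t • d} := (hmem z).2 h0
        rw [infDist_zero_of_mem hzl] at hz
        exact hznorm.ne (hz ▸ rfl)
      by_contra hcon
      push_neg at hcon
      have hAE : φ (z - p) * φ (x - p) < 0 :=
        lt_of_le_of_ne hcon (mul_ne_zero hzA hxE)
      set A := φ (z - p) with hA
      set E := φ (x - p) with hE
      have hAEne : A - E ≠ 0 := by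
        intro h
        have : A = E := by linarith [sub_eq_zero.1 h]
        rw [this] at hAE
        exact absurd hAE (not_lt.2 (mul_self_nonneg E))
      set θ : ℝ := A / (A - E) with hθ
      have hcases := mul_neg_iff.1 hAE
      have hθpos : 0 < θ := by
        rcases hcases with ⟨hA1, hE1⟩ | ⟨hA1, hE1⟩
        · exact div_pos hA1 (by linarith)
        · exact div_pos_of_neg_of_neg hA1 (by linarith)
      have hθlt : θ < 1 := by
        rcases hcases with ⟨hA1, hE1⟩ | ⟨hA1, hE1⟩
        · rw [div_lt_one (by linarith)]
          linarith
        · have hθ' : θ = (-A) / (E - A) := by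
            rw [hθ, div_eq_div_iff (by linarith) (by linarith)]
            ring
          rw [hθ', div_lt_one (by linarith)]
          linarith
      set w : X := z + θ • (x - z) with hw
      have hwl : w ∈ {q : X | ∃ t : ℝ, q = p + t • d} := by
        apply (hmem w).2
        have hw' : w - p = (z - p) + θ • ((x - p) - (z - p)) := by
          rw [hw]; module
        have hφw : φ (w - p) = A + θ * (E - A) := by
          rw [hA, hE, hw']
          simp only [map_add, map_sub, map_smul, smul_eq_mul]
        rw [hφw, hθ]
        field_simp
        ring
      have hle : Metric.infDist z {q : X | ∃ t : ℝ, q = p + t • d} ≤ dist z w :=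
        infDist_le_dist_of_mem hwl
      have hzw : dist z w = θ * ‖z - x‖ := by
        rw [dist_eq_norm]
        have : z - w = θ • (z - x) := by rw [hw]; module
        rw [this, norm_smul, Real.norm_eq_abs, abs_of_pos hθpos]
      rw [hz, hzw] at hle
      nlinarith
    -- notation
    set A := φ (u - p) with hA
    set Bv := φ (v - p) with hBv
    set E := φ (x - p) with hE
    have hsu : 0 < A * E := hsign u hu
    have hsv : 0 < Bv * E := hsign v hv
    have hABv : 0 < A * Bv := by nlinarith [mul_pos hsu hsv, mul_self_nonneg E]
    -- the midpoint
    set m : X := (2⁻¹ : ℝ) • u + (2⁻¹ : ℝ) • v with hmdef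
    have hmseg : m ∈ segment ℝ u v := ⟨2⁻¹, 2⁻¹, by norm_num, by norm_num, by norm_num, rfl⟩
    have hm : Metric.infDist m {q : X | ∃ t : ℝ, q = p + t • d} = ‖m - x‖ :=
      hseg hmseg
    have hmp : m - p = (2⁻¹ : ℝ) • (u - p) + (2⁻¹ : ℝ) • (v - p) := by
      rw [hmdef]; module
    have hφm : φ (m - p) = 2⁻¹ * A + 2⁻¹ * Bv := by
      rw [hmp, map_add, map_smul, map_smul, ← hA, ← hBv]
      simp [smul_eq_mul]
    -- norm additivity
    have h2m : (u - x) + (v - x) = (2 : ℝ) • (m - x) := by rw [hmdef]; module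
    have habs : |A + Bv| = |A| + |Bv| := by
      rcases mul_pos_iff.1 hABv with ⟨h1, h2⟩ | ⟨h1, h2⟩
      · rw [abs_of_pos h1, abs_of_pos h2, abs_of_pos (by linarith)]
      · rw [abs_of_neg h1, abs_of_neg h2, abs_of_neg (by linarith)]
        ring
    have hnormadd : ‖(u - x) + (v - x)‖ = ‖u - x‖ + ‖v - x‖ := by
      rw [h2m, norm_smul, Real.norm_ofNat, ← hu, ← hv, ← hm, hdist m, hdist u, hdist v,
        hφm, ← hA, ← hBv]
      have h1 : |2⁻¹ * A + 2⁻¹ * Bv| = 2⁻¹ * |A + Bv| := by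
        rw [show 2⁻¹ * A + 2⁻¹ * Bv = 2⁻¹ * (A + Bv) by ring, abs_mul]
        norm_num
      rw [h1, habs]
      ring
    have hune : u - x ≠ 0 := by
      intro h
      have : u = x := by rwa [sub_eq_zero] at h
      rw [this, sub_self, norm_zero, hdist] at hu
      rcases mul_eq_zero.1 hu with h' | h'
      · rw [← this, ← hA] at h'
        have : A = 0 := abs_eq_zero.1 h'
        rw [this] at hsu; simp at hsu
      · exact hDpos.ne' h'
    have hvne : v - x ≠ 0 := by
      intro h
      have : v = x := by rwa [sub_eq_zero] at h
      rw [this, sub_self, norm_zero, hdist] at hv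
      rcases mul_eq_zero.1 hv with h' | h'
      · rw [← this, ← hBv] at h'
        have : Bv = 0 := abs_eq_zero.1 h'
        rw [this] at hsv; simp at hsv
      · exact hDpos.ne' h'
    haveI := hsc
    have hray : SameRay ℝ (u - x) (v - x) := sameRay_iff_norm_add.mpr hnormadd
    obtain ⟨r, hr, hru⟩ := hray.exists_pos_right hune hvne
    -- comparing distances gives |A| = r * |Bv|
    have hnorm_r : ‖u - x‖ = r * ‖v - x‖ := by
      rw [hru, norm_smul, Real.norm_eq_abs, abs_of_pos hr]
    have hAr : |A| * D = r * (|Bv| * D) := by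
      rw [← hdist u, ← hdist v, hu, hv]
      exact hnorm_r
    have hArabs : |A| = r * |Bv| := by
      have := mul_right_cancel₀ hDpos.ne' (by linarith [hAr] : |A| * D = (r * |Bv|) * D)
      exact this
    have hABr : A = r * Bv := by
      rcases mul_pos_iff.1 hABv with ⟨h1, h2⟩ | ⟨h1, h2⟩
      · rw [abs_of_pos h1, abs_of_pos h2] at hArabs
        exact hArabs
      · rw [abs_of_neg h1, abs_of_neg h2] at hArabs
        linarith
    -- the functional along the ray
    have hφru : A - E = r * (Bv - E) := by
      have h1 : φ (u - x) = A - E := by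
        rw [show u - x = (u - p) - (x - p) by abel, map_sub]
      have h2 : φ (v - x) = Bv - E := by
        rw [show v - x = (v - p) - (x - p) by abel, map_sub]
      rw [← h1, ← h2, hru, map_smul, smul_eq_mul]
    have hr1 : r = 1 := by
      have hE0 : E ≠ 0 := hxE
      have : E * (1 - r) = 0 := by nlinarith [hφru, hABr]
      rcases mul_eq_zero.1 this with h | h
      · exact absurd h hE0
      · linarith
    rw [hr1, one_smul] at hru
    rw [sub_left_inj] at hru
    exact huv hru
  · -- no segment on any parabola ⟹ strictly convex
    intro hpar
    apply StrictConvexSpace.of_pairwise_sphere_norm_ne_two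
    intro a ha b hb hab
    rw [mem_sphere_zero_iff_norm] at ha hb
    intro habs
    -- every point of the segment [a,b] lies on the unit sphere
    have hsphere : ∀ z ∈ segment ℝ a b, ‖z‖ = 1 := by
      rintro z ⟨c₁, c₂, hc₁, hc₂, hcsum, rfl⟩
      have hle : ‖c₁ • a + c₂ • b‖ ≤ 1 := by
        calc ‖c₁ • a + c₂ • b‖ ≤ ‖c₁ • a‖ + ‖c₂ • b‖ := norm_add_le _ _
          _ = c₁ + c₂ := by
              rw [norm_smul, norm_smul, ha, hb, Real.norm_eq_abs, Real.norm_eq_abs,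
                abs_of_nonneg hc₁, abs_of_nonneg hc₂]
              ring
          _ = 1 := hcsum
      have hge : 1 ≤ ‖c₁ • a + c₂ • b‖ := by
        have hsum : a + b = (c₁ • a + c₂ • b) + (c₂ • a + c₁ • b) := by
          have h := hcsum
          have : (c₁ • a + c₂ • b) + (c₂ • a + c₁ • b) = (c₁ + c₂) • a + (c₁ + c₂) • b := by
            module
          rw [this, hcsum, one_smul, one_smul]
        have h2 : (2 : ℝ) = ‖a + b‖ := habs.symm
        have hle2 : ‖a + b‖ ≤ ‖c₁ • a + c₂ • b‖ + ‖c₂ • a + c₁ • b‖ := by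
          rw [hsum]; exact norm_add_le _ _
        have hle3 : ‖c₂ • a + c₁ • b‖ ≤ 1 := by
          calc ‖c₂ • a + c₁ • b‖ ≤ ‖c₂ • a‖ + ‖c₁ • b‖ := norm_add_le _ _
            _ = c₂ + c₁ := by
                rw [norm_smul, norm_smul, ha, hb, Real.norm_eq_abs, Real.norm_eq_abs,
                  abs_of_nonneg hc₂, abs_of_nonneg hc₁]
                ring
            _ = 1 := by linarith
        linarith
      linarith
    -- set up the line and apply the hypothesis
    have hd : a - b ≠ 0 := sub_ne_zero.2 hab
    obtain ⟨φ, D, hDpos, hφd, hdist, hmem, g, hg⟩ := parab_line_formula hdim hd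
    -- choose the sign so that the focus 0 is not on the line
    obtain ⟨s, hs1, hsφ⟩ : ∃ s : ℝ, |s| = 1 ∧ φ b - s * D⁻¹ ≠ 0 := by
      rcases eq_or_ne (φ b - D⁻¹) 0 with h | h
      · refine ⟨-1, by norm_num, ?_⟩
        intro h'
        have hD : D⁻¹ ≠ 0 := inv_ne_zero hDpos.ne'
        have : φ b = D⁻¹ := by linarith [sub_eq_zero.1 h]
        rw [this] at h'
        have : (2 : ℝ) * D⁻¹ = 0 := by linarith
        have : D⁻¹ = 0 := by linarith
        exact hD this
      · exact ⟨1, by norm_num, by simpa using h⟩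
    set p : X := b - s • (D⁻¹ • g) with hpdef
    have hφp : φ p = φ b - s * D⁻¹ := by
      rw [hpdef, map_sub, map_smul, map_smul, hg]
      simp [smul_eq_mul]
    have h0 : (0 : X) ∉ {q : X | ∃ t : ℝ, q = p + t • (a - b)} := by
      intro h0'
      have := (hmem p 0).1 h0'
      rw [zero_sub, map_neg, hφp] at this
      exact hsφ (by linarith)
    -- every point of the segment [a, b] is on the parabola with focus 0
    have hsub : segment ℝ a b ⊆
        {z : X | Metric.infDist z {q : X | ∃ t : ℝ, q = p + t • (a - b)} = ‖z - 0‖} := by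
      rintro z hz
      have hz1 : ‖z‖ = 1 := hsphere z hz
      obtain ⟨c₁, c₂, hc₁, hc₂, hcsum, rfl⟩ := hz
      simp only [Set.mem_setOf_eq]
      have hφab : φ a = φ b := by
        have : φ (a - b) = 0 := hφd
        rw [map_sub] at this
        linarith
      have hzp : φ (c₁ • a + c₂ • b - p) = s * D⁻¹ := by
        rw [hpdef]
        have : c₁ • a + c₂ • b - (b - s • (D⁻¹ • g))
            = c₁ • a + c₂ • b - b + s • (D⁻¹ • g) := by abel
        rw [this, map_add, map_sub, map_add, map_smul, map_smul, map_smul, map_smul, hg, hφab]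
        simp only [smul_eq_mul, mul_one]
        have : c₁ * φ b + c₂ * φ b = φ b := by
          rw [← add_mul, hcsum, one_mul]
        linarith
      rw [hdist p, hzp, sub_zero, hz1]
      rw [abs_mul, hs1, one_mul, abs_of_pos (inv_pos.2 hDpos)]
      field_simp
    exact hpar _ p (a - b) hd rfl 0 h0
      ⟨a, hsub (left_mem_segment ℝ a b), b, hsub (right_mem_segment ℝ a b), hab, hsub⟩
end
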